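/- arXiv:hep-th/0101089 — 4 statements merged into one kernel-verified Lean document; each statement's English description precedes it below -/
import Mathlib

section
/- The Dirac bracket satisfies the Jacobi identity: for all smooth functions f, g, h, {f,{g,h}^D}^D + {g,{h,f}^D}^D + {h,{f,g}^D}^D = 0. -/
/-- The Dirac bracket associated to a Poisson bracket `br`, second-class constraints `θ`
and the inverse `Δinv` of the Dirac matrix `Δ α β = br (θ α) (θ β)`:
`{f,g}^D = {f,g} - {f,θ_α} Δ^{αβ} {θ_β,g}`. -/
noncomputable def diracBracket {A : Type*} [CommRing A] {m : ℕ}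
    (br : A → A → A) (θ : Fin m → A) (Δinv : Fin m → Fin m → A) (f g : A) : A :=
  br f g - ∑ α, ∑ β, br f (θ α) * Δinv α β * br (θ β) g

/-! Write `ξ x = {x, θ} Δ⁻¹` for the multipliers, so that `{f, g}^D = {f, g} - Σ_b ξ_f^b {θ_b, g}`.
Expanding `{f, {g, h}^D}^D` with the Leibniz rule, `{x, Δ⁻¹} = -Δ⁻¹ {x, Δ} Δ⁻¹` and the
antisymmetry of `Δ⁻¹` produces terms of degree `0, 1, 2, 3` in the multipliers. In the cyclic
sum the terms of degree `k` assemble into Jacobi identities of `{·,·}` in which `k` of the three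
arguments are constraints `θ`. -/

open Finset Matrix

structure IsPoissonBracket {A : Type*} [CommRing A] (br : A → A → A) : Prop where
  map_add_right : ∀ f g h, br f (g + h) = br f g + br f h
  antisymm : ∀ f g, br f g = -br g f
  leibniz_right : ∀ f g h, br f (g * h) = br f g * h + g * br f h
  jacobi : ∀ f g h, br f (br g h) + br g (br h f) + br h (br f g) = 0

theorem Matrix.transpose_eq_neg_of_mul_eq_one {ι R : Type*} [Fintype ι] [DecidableEq ι]
    [CommRing R] {M N : Matrix ι ι R} (hM : Mᵀ = -M) (h : M * N = 1) : Nᵀ = -N := by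
  have hNM : Nᵀ * M = -1 := by
    rw [← neg_eq_iff_eq_neg, ← mul_neg, ← hM, ← transpose_mul, h, transpose_one]
  calc Nᵀ = Nᵀ * M * N := by rw [mul_assoc, h, mul_one]
    _ = -N := by rw [hNM, neg_one_mul]

namespace IsPoissonBracket

variable {A : Type*} [CommRing A] {br : A → A → A}

theorem map_sum_right (hP : IsPoissonBracket br) (x : A) {ι : Type*} (s : Finset ι)
    (g : ι → A) : br x (∑ i ∈ s, g i) = ∑ i ∈ s, br x (g i) :=
  map_sum (AddMonoidHom.mk' (br x) (hP.map_add_right x)) g s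

theorem map_sub_right (hP : IsPoissonBracket br) (x g h : A) :
    br x (g - h) = br x g - br x h :=
  map_sub (AddMonoidHom.mk' (br x) (hP.map_add_right x)) g h

theorem map_zero_right (hP : IsPoissonBracket br) (x : A) : br x 0 = 0 :=
  map_zero (AddMonoidHom.mk' (br x) (hP.map_add_right x))

theorem map_one_right (hP : IsPoissonBracket br) (x : A) : br x 1 = 0 := by
  simpa using hP.leibniz_right x 1 1

theorem bracket_dotProduct (hP : IsPoissonBracket br) (x : A) {ι : Type*} [Fintype ι]
    (v w : ι → A) : br x (v ⬝ᵥ w) = (br x ∘ v) ⬝ᵥ w + v ⬝ᵥ (br x ∘ w) := by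
  simp only [dotProduct, hP.map_sum_right, hP.leibniz_right, sum_add_distrib, Function.comp]

theorem bracket_comp_vecMul (hP : IsPoissonBracket br) (x : A) {ι κ : Type*} [Fintype ι]
    (v : ι → A) (N : Matrix ι κ A) :
    br x ∘ (v ᵥ* N) = (br x ∘ v) ᵥ* N + v ᵥ* N.map (br x) := by
  ext b
  exact hP.bracket_dotProduct x v _

theorem map_bracket_mul (hP : IsPoissonBracket br) (x : A) {l ι κ : Type*} [Fintype ι]
    (M : Matrix l ι A) (N : Matrix ι κ A) :
    (M * N).map (br x) = M.map (br x) * N + M * N.map (br x) := by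
  ext i k
  exact hP.bracket_dotProduct x _ _

theorem map_bracket_one (hP : IsPoissonBracket br) (x : A) {ι : Type*} [DecidableEq ι] :
    (1 : Matrix ι ι A).map (br x) = 0 := by
  ext i j
  by_cases hij : i = j <;> simp [one_apply, hij, hP.map_one_right, hP.map_zero_right]

theorem map_bracket_of_mul_eq_one (hP : IsPoissonBracket br) (x : A) {ι : Type*} [Fintype ι]
    [DecidableEq ι] {M N : Matrix ι ι A} (h : M * N = 1) :
    N.map (br x) = -(N * M.map (br x) * N) := by
  have hNM : N.map (br x) * M = -(N * M.map (br x)) := by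
    rw [eq_neg_iff_add_eq_zero, ← hP.map_bracket_mul, mul_eq_one_comm.mp h, hP.map_bracket_one]
  calc N.map (br x) = N.map (br x) * M * N := by rw [mul_assoc, h, mul_one]
    _ = -(N * M.map (br x) * N) := by rw [hNM, neg_mul]

theorem sum_mul_jacobi (hP : IsPoissonBracket br) {ι : Type*} [Fintype ι] (t v : ι → A)
    (y z : A) :
    ∑ c, v c * br (t c) (br y z) + ∑ c, v c * br z (br (t c) y)
      + ∑ c, br y (br z (t c)) * v c = 0 := by
  simp only [← sum_add_distrib]
  exact sum_eq_zero fun c _ => by linear_combination v c * hP.jacobi (t c) y z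

theorem sum_sum_mul_jacobi (hP : IsPoissonBracket br) {ι : Type*} [Fintype ι]
    (t v w : ι → A) (z : A) :
    ∑ p, ∑ q, v p * br z (br (t p) (t q)) * w q
      + ∑ p, v p * ∑ q, w q * br (t p) (br (t q) z)
      + ∑ q, w q * ∑ p, br (t q) (br z (t p)) * v p = 0 := by
  simp only [mul_sum]
  rw [sum_comm (s := univ) (t := univ) (f := fun q p => w q * (br (t q) (br z (t p)) * v p))]
  simp only [← sum_add_distrib]
  exact sum_eq_zero fun p _ => sum_eq_zero fun q _ => by
    linear_combination v p * w q * hP.jacobi z (t p) (t q)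

theorem sum_sum_sum_mul_jacobi (hP : IsPoissonBracket br) {ι : Type*} [Fintype ι]
    (t u v w : ι → A) :
    ∑ c, u c * ∑ p, ∑ q, v p * br (t c) (br (t p) (t q)) * w q
      + ∑ c, v c * ∑ p, ∑ q, w p * br (t c) (br (t p) (t q)) * u q
      + ∑ c, w c * ∑ p, ∑ q, u p * br (t c) (br (t p) (t q)) * v q = 0 := by
  simp only [mul_sum]
  rw [sum_comm_cycle (f := fun c p q => v c * (w p * br (t c) (br (t p) (t q)) * u q)),
    ← sum_comm_cycle (f := fun p q c => w c * (u p * br (t c) (br (t p) (t q)) * v q))]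
  simp only [← sum_add_distrib]
  exact sum_eq_zero fun c _ => sum_eq_zero fun p _ => sum_eq_zero fun q _ => by
    linear_combination u c * v p * w q * hP.jacobi (t c) (t p) (t q)

end IsPoissonBracket

section DiracMatrix

variable {A : Type*} [CommRing A] {br : A → A → A} {ι : Type*} {θ : ι → A} {C : Matrix ι ι A}

def diracMatrix (br : A → A → A) (θ : ι → A) : Matrix ι ι A :=
  Matrix.of fun a b => br (θ a) (θ b)

theorem IsPoissonBracket.diracMatrix_transpose (hP : IsPoissonBracket br) :
    (diracMatrix br θ)ᵀ = -diracMatrix br θ := by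
  ext a b
  exact hP.antisymm _ _

variable [Fintype ι]

def diracMultiplier (br : A → A → A) (θ : ι → A) (C : Matrix ι ι A) (x : A) : ι → A :=
  (fun a => br x (θ a)) ᵥ* C

variable [DecidableEq ι]

theorem IsPoissonBracket.mulVec_bracket_constraint (hP : IsPoissonBracket br)
    (hC : diracMatrix br θ * C = 1) (h : A) :
    C *ᵥ (fun b => br (θ b) h) = diracMultiplier br θ C h := by
  have hCt : Cᵀ = -C := transpose_eq_neg_of_mul_eq_one hP.diracMatrix_transpose hC
  have hflip : (fun b => br (θ b) h) = -fun b => br h (θ b) :=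
    funext fun b => hP.antisymm _ _
  rw [hflip, mulVec_neg, ← vecMul_transpose, hCt, vecMul_neg, neg_neg, diracMultiplier]

theorem IsPoissonBracket.bracket_diracMultiplier (hP : IsPoissonBracket br)
    (hC : diracMatrix br θ * C = 1) (x g : A) :
    br x ∘ diracMultiplier br θ C g = (fun a => br x (br g (θ a))) ᵥ* C
      - (diracMultiplier br θ C g ᵥ* (diracMatrix br θ).map (br x)) ᵥ* C := by
  rw [diracMultiplier, hP.bracket_comp_vecMul, hP.map_bracket_of_mul_eq_one x hC, vecMul_neg,
    vecMul_vecMul, vecMul_vecMul, mul_assoc, ← sub_eq_add_neg]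
  rfl

end DiracMatrix

section DiracBracket

variable {A : Type*} [CommRing A] {br : A → A → A} {m : ℕ} {θ : Fin m → A}
  {C : Matrix (Fin m) (Fin m) A}

local notation "ξ" => diracMultiplier br θ C

theorem diracBracket_eq_sub_dotProduct (g h : A) :
    diracBracket br θ C g h = br g h - ξ g ⬝ᵥ fun b => br (θ b) h := by
  simp only [diracBracket, diracMultiplier, dotProduct, vecMul, sum_mul]
  rw [sum_comm]

theorem IsPoissonBracket.bracket_diracBracket (hP : IsPoissonBracket br)
    (hC : diracMatrix br θ * C = 1) (x g h : A) :
    br x (diracBracket br θ C g h) = br x (br g h) - ∑ a, br x (br g (θ a)) * ξ h a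
      + ∑ p, ∑ q, ξ g p * br x (br (θ p) (θ q)) * ξ h q
      - ∑ b, ξ g b * br x (br (θ b) h) := by
  rw [diracBracket_eq_sub_dotProduct, hP.map_sub_right, hP.bracket_dotProduct,
    hP.bracket_diracMultiplier hC, sub_dotProduct, ← dotProduct_mulVec, ← dotProduct_mulVec,
    hP.mulVec_bracket_constraint hC]
  simp only [dotProduct, vecMul, Function.comp_apply, map_apply, diracMatrix, of_apply, sum_mul]
  rw [sum_comm (f := fun q p => ξ g p * br x (br (θ p) (θ q)) * ξ h q)]
  ring

theorem IsPoissonBracket.diracBracket_diracBracket (hP : IsPoissonBracket br)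
    (hC : diracMatrix br θ * C = 1) (f g h : A) :
    diracBracket br θ C f (diracBracket br θ C g h) = br f (br g h)
      - ∑ a, br f (br g (θ a)) * ξ h a
      + ∑ p, ∑ q, ξ g p * br f (br (θ p) (θ q)) * ξ h q
      - ∑ b, ξ g b * br f (br (θ b) h)
      - ∑ c, ξ f c * br (θ c) (br g h)
      + ∑ c, ξ f c * ∑ a, br (θ c) (br g (θ a)) * ξ h a
      - ∑ c, ξ f c * ∑ p, ∑ q, ξ g p * br (θ c) (br (θ p) (θ q)) * ξ h q
      + ∑ c, ξ f c * ∑ b, ξ g b * br (θ c) (br (θ b) h) := by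
  rw [diracBracket_eq_sub_dotProduct, hP.bracket_diracBracket hC]
  simp only [dotProduct, hP.bracket_diracBracket hC, mul_sub, mul_add, sum_sub_distrib,
    sum_add_distrib]
  ring

end DiracBracket

theorem dirac_bracket_jacobi_general {A : Type*} [CommRing A] {m : ℕ}
    (br : A → A → A)
    (hadd : ∀ f g h, br f (g + h) = br f g + br f h)
    (hanti : ∀ f g, br f g = - br g f)
    (hleibniz : ∀ f g h, br f (g * h) = br f g * h + g * br f h)
    (hjacobi : ∀ f g h, br f (br g h) + br g (br h f) + br h (br f g) = 0)
    (θ : Fin m → A) (Δinv : Fin m → Fin m → A)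
    (hinv_right : ∀ α β, ∑ γ, br (θ α) (θ γ) * Δinv γ β = if α = β then 1 else 0) :
    ∀ f g h,
      diracBracket br θ Δinv f (diracBracket br θ Δinv g h)
        + diracBracket br θ Δinv g (diracBracket br θ Δinv h f)
        + diracBracket br θ Δinv h (diracBracket br θ Δinv f g) = 0 := by
  intro f g h
  have hP : IsPoissonBracket br := ⟨hadd, hanti, hleibniz, hjacobi⟩
  set C : Matrix (Fin m) (Fin m) A := Δinv
  have hC : diracMatrix br θ * C = 1 := by
    ext α β
    simpa [diracMatrix, mul_apply, one_apply] using hinv_right α β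
  set ξ := diracMultiplier br θ C
  rw [hP.diracBracket_diracBracket hC f g h, hP.diracBracket_diracBracket hC g h f,
    hP.diracBracket_diracBracket hC h f g]
  linear_combination hjacobi f g h
    - hP.sum_mul_jacobi θ (ξ f) g h - hP.sum_mul_jacobi θ (ξ g) h f
    - hP.sum_mul_jacobi θ (ξ h) f g
    + hP.sum_sum_mul_jacobi θ (ξ f) (ξ g) h + hP.sum_sum_mul_jacobi θ (ξ g) (ξ h) f
    + hP.sum_sum_mul_jacobi θ (ξ h) (ξ f) g
    - hP.sum_sum_sum_mul_jacobi θ (ξ f) (ξ g) (ξ h)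

/-- The Dirac bracket satisfies the Jacobi identity:
`{f,{g,h}^D}^D + {g,{h,f}^D}^D + {h,{f,g}^D}^D = 0`. -/
theorem dirac_bracket_jacobi {A : Type*} [CommRing A] {m : ℕ}
    (br : A → A → A)
    (hadd : ∀ f g h, br f (g + h) = br f g + br f h)
    (hanti : ∀ f g, br f g = - br g f)
    (hleibniz : ∀ f g h, br f (g * h) = br f g * h + g * br f h)
    (hjacobi : ∀ f g h, br f (br g h) + br g (br h f) + br h (br f g) = 0)
    (θ : Fin m → A) (Δinv : Fin m → Fin m → A)
    (hinv_left : ∀ α β, ∑ γ, Δinv α γ * br (θ γ) (θ β) = if α = β then 1 else 0)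
    (hinv_right : ∀ α β, ∑ γ, br (θ α) (θ γ) * Δinv γ β = if α = β then 1 else 0) :
    ∀ f g h,
      diracBracket br θ Δinv f (diracBracket br θ Δinv g h)
        + diracBracket br θ Δinv g (diracBracket br θ Δinv h f)
        + diracBracket br θ Δinv h (diracBracket br θ Δinv f g) = 0 :=
  dirac_bracket_jacobi_general br hadd hanti hleibniz hjacobi θ Δinv hinv_right
end

section
/- The Dirac bracket of two functions vanishing on the constraint surface descends to the quotient: if f = F^α θ_α vanishes as a combination of the constraints, then for every smooth g, {f, g}^D = θ_α ({F^α, g}^D), i.e. {f,g}^D again lies in the ideal generated by the constraints. -/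
section DiracBracket

variable {A : Type*} [CommRing A] {m : ℕ} (br : A → A → A)

theorem bracket_add_left_of_antisymm (hadd : ∀ f g h, br f (g + h) = br f g + br f h)
    (hanti : ∀ f g, br f g = - br g f) (a b c : A) :
    br (a + b) c = br a c + br b c := by
  rw [hanti, hadd, hanti a c, hanti b c, neg_add]

theorem bracket_mul_left_of_antisymm (hleibniz : ∀ f g h, br f (g * h) = br f g * h + g * br f h)
    (hanti : ∀ f g, br f g = - br g f) (a b c : A) :
    br (a * b) c = br a c * b + a * br b c := by
  rw [hanti, hleibniz, hanti c a, hanti c b]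
  ring

variable (θ : Fin m → A) (Δinv : Fin m → Fin m → A)

theorem diracBracket_add_left (hadd : ∀ a b c, br (a + b) c = br a c + br b c) (a b c : A) :
    diracBracket br θ Δinv (a + b) c = diracBracket br θ Δinv a c + diracBracket br θ Δinv b c := by
  simp only [diracBracket, hadd, add_mul, Finset.sum_add_distrib]
  ring

theorem diracBracket_sum_left (hadd : ∀ a b c, br (a + b) c = br a c + br b c)
    {ι : Type*} (s : Finset ι) (f : ι → A) (c : A) :
    diracBracket br θ Δinv (∑ i ∈ s, f i) c = ∑ i ∈ s, diracBracket br θ Δinv (f i) c :=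
  map_sum (AddMonoidHom.mk' (diracBracket br θ Δinv · c)
    (diracBracket_add_left br θ Δinv hadd · · c)) f s

theorem diracBracket_mul_left (hmul : ∀ a b c, br (a * b) c = br a c * b + a * br b c)
    (a b c : A) :
    diracBracket br θ Δinv (a * b) c =
      diracBracket br θ Δinv a c * b + a * diracBracket br θ Δinv b c := by
  have hcorr : ∀ α β, br (a * b) (θ α) * Δinv α β * br (θ β) c =
      br a (θ α) * Δinv α β * br (θ β) c * b + a * (br b (θ α) * Δinv α β * br (θ β) c) := by
    intro α β
    rw [hmul]
    ring
  simp only [diracBracket, hcorr, Finset.sum_add_distrib, ← Finset.sum_mul, ← Finset.mul_sum]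
  rw [hmul]
  ring

theorem diracBracket_constraint_left
    (hinv_right : ∀ α β, ∑ γ, br (θ α) (θ γ) * Δinv γ β = if α = β then 1 else 0)
    (γ : Fin m) (g : A) :
    diracBracket br θ Δinv (θ γ) g = 0 := by
  have hcorr : ∑ α, ∑ β, br (θ γ) (θ α) * Δinv α β * br (θ β) g = br (θ γ) g :=
    calc ∑ α, ∑ β, br (θ γ) (θ α) * Δinv α β * br (θ β) g
        = ∑ β, (∑ α, br (θ γ) (θ α) * Δinv α β) * br (θ β) g := by
          rw [Finset.sum_comm]
          simp only [Finset.sum_mul]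
      _ = br (θ γ) g := by simp only [hinv_right, ite_mul, one_mul, zero_mul, Finset.sum_ite_eq,
          Finset.mem_univ, if_true]
  rw [diracBracket, hcorr, sub_self]

end DiracBracket

theorem dirac_bracket_ideal_general {A : Type*} [CommRing A] {m : ℕ}
    (br : A → A → A)
    (hadd : ∀ f g h, br f (g + h) = br f g + br f h)
    (hanti : ∀ f g, br f g = - br g f)
    (hleibniz : ∀ f g h, br f (g * h) = br f g * h + g * br f h)
    (θ : Fin m → A) (Δinv : Fin m → Fin m → A)
    (hinv_right : ∀ α β, ∑ γ, br (θ α) (θ γ) * Δinv γ β = if α = β then 1 else 0)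
    (F : Fin m → A) (f : A) (hf : f = ∑ α, F α * θ α) :
    ∀ g, diracBracket br θ Δinv f g = ∑ α, θ α * diracBracket br θ Δinv (F α) g := by
  intro g
  subst hf
  rw [diracBracket_sum_left br θ Δinv (bracket_add_left_of_antisymm br hadd hanti)]
  refine Finset.sum_congr rfl fun α _ => ?_
  rw [diracBracket_mul_left br θ Δinv (bracket_mul_left_of_antisymm br hleibniz hanti),
    diracBracket_constraint_left br θ Δinv hinv_right, mul_zero, add_zero, mul_comm]

/-- If `f = F^α θ_α` lies in the ideal generated by the constraints, then
`{f,g}^D = θ_α · {F^α, g}^D`, so the Dirac bracket descends to the quotient by this ideal. -/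
theorem dirac_bracket_ideal {A : Type*} [CommRing A] {m : ℕ}
    (br : A → A → A)
    (hadd : ∀ f g h, br f (g + h) = br f g + br f h)
    (hanti : ∀ f g, br f g = - br g f)
    (hleibniz : ∀ f g h, br f (g * h) = br f g * h + g * br f h)
    (θ : Fin m → A) (Δinv : Fin m → Fin m → A)
    (hinv_left : ∀ α β, ∑ γ, Δinv α γ * br (θ γ) (θ β) = if α = β then 1 else 0)
    (hinv_right : ∀ α β, ∑ γ, br (θ α) (θ γ) * Δinv γ β = if α = β then 1 else 0)
    (F : Fin m → A) (f : A) (hf : f = ∑ α, F α * θ α) :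
    ∀ g, diracBracket br θ Δinv f g = ∑ α, θ α * diracBracket br θ Δinv (F α) g :=
  dirac_bracket_ideal_general br hadd hanti hleibniz θ Δinv hinv_right F f hf
end

section
/- The Dirac connection ∇̄ with Christoffel coefficients Γ̄^k_{ij} = ω^{kl}(Γ_{lij} + ∂_l θ_β Δ^{βα} ∇_i∇_j θ_α), where ∇_i∇_j θ_α = ∂_i∂_j θ_α − Γ^m_{ij} ∂_m θ_α, annihilates the differentials of the constraints: ∇̄_i (∂_j θ_γ) = ∂_i ∂_j θ_γ − Γ̄^k_{ij} ∂_k θ_γ = 0 for all γ. -/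
open Matrix

/-- Standard basis vector of `Fin n → ℝ`. -/
noncomputable def bvec (n : ℕ) (i : Fin n) : Fin n → ℝ := Pi.single i 1

/-- First partial derivative `∂_i f` at `x`. -/
noncomputable def d1 {n : ℕ} (f : (Fin n → ℝ) → ℝ) (x : Fin n → ℝ) (i : Fin n) : ℝ :=
  fderiv ℝ f x (bvec n i)

/-- Second partial derivative `∂_i ∂_j f` at `x`. -/
noncomputable def d2 {n : ℕ} (f : (Fin n → ℝ) → ℝ) (x : Fin n → ℝ) (i j : Fin n) : ℝ :=
  fderiv ℝ (fun y => fderiv ℝ f y (bvec n j)) x (bvec n i)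

/-- Christoffel symbols `Γ^k_{ij} = ω^{kl} Γ_{lij}` of the symplectic connection. -/
noncomputable def chris {n : ℕ} (ωinv : (Fin n → ℝ) → Matrix (Fin n) (Fin n) ℝ)
    (Γl : (Fin n → ℝ) → Fin n → Fin n → Fin n → ℝ)
    (x : Fin n → ℝ) (k i j : Fin n) : ℝ :=
  ∑ l, ωinv x k l * Γl x l i j

/-- Second covariant derivative `∇_i ∇_j θ_α = ∂_i ∂_j θ_α − Γ^m_{ij} ∂_m θ_α`. -/
noncomputable def nabla2 {n : ℕ} (ωinv : (Fin n → ℝ) → Matrix (Fin n) (Fin n) ℝ)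
    (Γl : (Fin n → ℝ) → Fin n → Fin n → Fin n → ℝ)
    (θ : (Fin n → ℝ) → ℝ) (x : Fin n → ℝ) (i j : Fin n) : ℝ :=
  d2 θ x i j - ∑ m, chris ωinv Γl x m i j * d1 θ x m

/-- The Dirac matrix `Δ_{αβ} = ∂_i θ_α ω^{ij} ∂_j θ_β`. -/
noncomputable def diracMat {n m : ℕ} (ωinv : (Fin n → ℝ) → Matrix (Fin n) (Fin n) ℝ)
    (θ : Fin m → (Fin n → ℝ) → ℝ) (x : Fin n → ℝ) (α β : Fin m) : ℝ :=
  ∑ i, ∑ j, d1 (θ α) x i * ωinv x i j * d1 (θ β) x j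

/-- Christoffel symbols of the Dirac connection
`Γ̄^k_{ij} = ω^{kl} (Γ_{lij} + ∂_l θ_β Δ^{βα} ∇_i ∇_j θ_α)`. -/
noncomputable def diracChris {n m : ℕ} (ωinv : (Fin n → ℝ) → Matrix (Fin n) (Fin n) ℝ)
    (Γl : (Fin n → ℝ) → Fin n → Fin n → Fin n → ℝ)
    (θ : Fin m → (Fin n → ℝ) → ℝ) (Δinv : (Fin n → ℝ) → Fin m → Fin m → ℝ)
    (x : Fin n → ℝ) (k i j : Fin n) : ℝ :=
  ∑ l, ωinv x k l * (Γl x l i j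
    + ∑ β, ∑ α, d1 (θ β) x l * Δinv x β α * nabla2 ωinv Γl (θ α) x i j)

lemma sum_swap4 {A B : Type*} [Fintype A] [Fintype B] (f : A → A → B → B → ℝ) :
    ∑ k : A, ∑ l : A, ∑ β : B, ∑ α : B, f k l β α
      = ∑ α : B, ∑ β : B, ∑ k : A, ∑ l : A, f k l β α :=
  calc ∑ k : A, ∑ l : A, ∑ β : B, ∑ α : B, f k l β α
      = ∑ k : A, ∑ l : A, ∑ α : B, ∑ β : B, f k l β α :=
        Finset.sum_congr rfl fun k _ => Finset.sum_congr rfl fun l _ => Finset.sum_comm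
    _ = ∑ k : A, ∑ α : B, ∑ l : A, ∑ β : B, f k l β α :=
        Finset.sum_congr rfl fun k _ => Finset.sum_comm
    _ = ∑ α : B, ∑ k : A, ∑ l : A, ∑ β : B, f k l β α := Finset.sum_comm
    _ = ∑ α : B, ∑ β : B, ∑ k : A, ∑ l : A, f k l β α :=
        Finset.sum_congr rfl fun α _ =>
          calc ∑ k : A, ∑ l : A, ∑ β : B, f k l β α
              = ∑ k : A, ∑ β : B, ∑ l : A, f k l β α :=
                Finset.sum_congr rfl fun k _ => Finset.sum_comm
            _ = ∑ β : B, ∑ k : A, ∑ l : A, f k l β α := Finset.sum_comm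

/-- The Dirac connection annihilates the differentials of the constraints:
`∇̄_i (∂_j θ_γ) = ∂_i ∂_j θ_γ − Γ̄^k_{ij} ∂_k θ_γ = 0`. -/
theorem diracConnection_kills_dtheta {n m : ℕ}
    (ω ωinv : (Fin n → ℝ) → Matrix (Fin n) (Fin n) ℝ)
    (hω : ∀ i j, ContDiff ℝ (⊤ : ℕ∞) (fun x => ω x i j))
    (hanti : ∀ x, (ω x)ᵀ = -ω x)
    (hωinv : ∀ x, ω x * ωinv x = 1 ∧ ωinv x * ω x = 1)
    (Γl : (Fin n → ℝ) → Fin n → Fin n → Fin n → ℝ)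
    (hΓsym : ∀ x l i j, Γl x l i j = Γl x l j i)
    (hΓcompat : ∀ x i j k, d1 (fun y => ω y i k) x j - Γl x i j k + Γl x k j i = 0)
    (θ : Fin m → (Fin n → ℝ) → ℝ)
    (hθ : ∀ α, ContDiff ℝ (⊤ : ℕ∞) (θ α))
    (Δinv : (Fin n → ℝ) → Fin m → Fin m → ℝ)
    (hΔl : ∀ x α β, ∑ γ, Δinv x α γ * diracMat ωinv θ x γ β = if α = β then 1 else 0)
    (hΔr : ∀ x α β, ∑ γ, diracMat ωinv θ x α γ * Δinv x γ β = if α = β then 1 else 0) :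
    ∀ (x : Fin n → ℝ) (γ : Fin m) (i j : Fin n),
      d2 (θ γ) x i j - ∑ k, diracChris ωinv Γl θ Δinv x k i j * d1 (θ γ) x k = 0 := by
  intro x γ i j
  have key : ∑ k, diracChris ωinv Γl θ Δinv x k i j * d1 (θ γ) x k
      = (∑ k, chris ωinv Γl x k i j * d1 (θ γ) x k)
        + ∑ α, (∑ β, diracMat ωinv θ x γ β * Δinv x β α) * nabla2 ωinv Γl (θ α) x i j := by
    simp only [diracChris, chris, diracMat, Finset.sum_mul, Finset.mul_sum, mul_add,
      add_mul, Finset.sum_add_distrib]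
    congr 1
    rw [sum_swap4 (f := fun k l β α =>
      ωinv x k l * (d1 (θ β) x l * Δinv x β α * nabla2 ωinv Γl (θ α) x i j)
        * d1 (θ γ) x k)]
    refine Finset.sum_congr rfl fun α _ => Finset.sum_congr rfl fun β _ =>
      Finset.sum_congr rfl fun k _ => Finset.sum_congr rfl fun l _ => ?_
    ring
  rw [key]
  have h2 : ∀ α : Fin m, (∑ β, diracMat ωinv θ x γ β * Δinv x β α)
      = if γ = α then 1 else 0 := fun α => hΔr x γ α
  simp only [h2, ite_mul, one_mul, zero_mul, Finset.sum_ite_eq, Finset.mem_univ, if_true]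
  simp only [nabla2]
  ring
end

section
/- The Dirac connection preserves the Dirac bivector: ∇̄_i D^{jk} = ∂_i D^{jk} + Γ̄^j_{il} D^{lk} + Γ̄^k_{il} D^{jl} = 0, where D^{jk} = ω^{jk} − ω^{jl}∂_l θ_α Δ^{αβ} ∂_m θ_β ω^{mk} is the Poisson bivector of the Dirac bracket and Γ̄ is the Dirac connection Γ̄^k_{ij} = ω^{kl}(Γ_{lij} + ∂_l θ_β Δ^{βα} ∇_i∇_j θ_α). -/
open Matrix

/-- The Poisson bivector of the Dirac bracket:
`D^{jk} = ω^{jk} − ω^{jl} ∂_l θ_α Δ^{αβ} ∂_m θ_β ω^{mk}`. -/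
noncomputable def diracBivec {n m : ℕ} (ωinv : (Fin n → ℝ) → Matrix (Fin n) (Fin n) ℝ)
    (θ : Fin m → (Fin n → ℝ) → ℝ) (Δinv : (Fin n → ℝ) → Fin m → Fin m → ℝ)
    (x : Fin n → ℝ) (j k : Fin n) : ℝ :=
  ωinv x j k
    - ∑ l, ∑ p, ∑ α, ∑ β,
        ωinv x j l * d1 (θ α) x l * Δinv x α β * d1 (θ β) x p * ωinv x p k


/-! ### Auxiliary lemmas -/

lemma contDiff_d1 {n : ℕ} {f : (Fin n → ℝ) → ℝ} (hf : ContDiff ℝ (⊤ : ℕ∞) f) (i : Fin n) :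
    ContDiff ℝ (⊤ : ℕ∞) fun x => d1 f x i := by
  unfold d1
  exact (hf.fderiv_right (by simp)).clm_apply contDiff_const
lemma d1_add {n : ℕ} {f g : (Fin n → ℝ) → ℝ} {x : Fin n → ℝ}
    (hf : DifferentiableAt ℝ f x) (hg : DifferentiableAt ℝ g x) (i : Fin n) :
    d1 (fun y => f y + g y) x i = d1 f x i + d1 g x i := by
  unfold d1; rw [fderiv_fun_add hf hg]; rfl

lemma d1_mul {n : ℕ} {f g : (Fin n → ℝ) → ℝ} {x : Fin n → ℝ}
    (hf : DifferentiableAt ℝ f x) (hg : DifferentiableAt ℝ g x) (i : Fin n) :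
    d1 (fun y => f y * g y) x i = d1 f x i * g x + f x * d1 g x i := by
  unfold d1; rw [fderiv_fun_mul hf hg]; simp; ring
lemma d1_sum {n : ℕ} {ι : Type*} (s : Finset ι) {f : ι → (Fin n → ℝ) → ℝ} {x : Fin n → ℝ}
    (hf : ∀ a ∈ s, DifferentiableAt ℝ (f a) x) (i : Fin n) :
    d1 (fun y => ∑ a ∈ s, f a y) x i = ∑ a ∈ s, d1 (f a) x i := by
  unfold d1; rw [fderiv_fun_sum hf]; simp
lemma d1_const_fun {n : ℕ} {f : (Fin n → ℝ) → ℝ} {c : ℝ} (h : ∀ y, f y = c)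
    (x : Fin n → ℝ) (i : Fin n) : d1 f x i = 0 := by
  have : f = fun _ => c := funext h
  rw [this]; unfold d1; simp

/-- antisymmetric matrix with two-sided inverse has antisymmetric inverse -/
lemma inv_antisym {k : ℕ} {A B : Matrix (Fin k) (Fin k) ℝ} (hA : Aᵀ = -A)
    (h1 : A * B = 1) (h2 : B * A = 1) : Bᵀ = -B := by
  have h3 : (-Bᵀ) * A = 1 := by
    have := congrArg Matrix.transpose h1
    rw [Matrix.transpose_mul, hA, Matrix.transpose_one] at this
    calc (-Bᵀ) * A = Bᵀ * (-A) := by noncomm_ring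
    _ = 1 := this
  have : -Bᵀ = B := by
    calc -Bᵀ = (-Bᵀ) * (A * B) := by rw [h1, Matrix.mul_one]
    _ = ((-Bᵀ) * A) * B := by rw [Matrix.mul_assoc]
    _ = B := by rw [h3, Matrix.one_mul]
  calc Bᵀ = -(-Bᵀ) := by rw [neg_neg]
    _ = -B := by rw [this]

/-- derivative of entries of a pointwise-inverse matrix family -/
lemma d1_inv_entries {n k : ℕ} (A B : (Fin n → ℝ) → Matrix (Fin k) (Fin k) ℝ)
    (hA : ∀ i j, ContDiff ℝ (⊤ : ℕ∞) fun x => A x i j) (hB : ∀ i j, ContDiff ℝ (⊤ : ℕ∞) fun x => B x i j)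
    (hl : ∀ x, A x * B x = 1) (hr : ∀ x, B x * A x = 1) (x : Fin n → ℝ) (i : Fin n)
    (a b : Fin k) :
    d1 (fun y => B y a b) x i
      = -∑ c, ∑ d, B x a c * d1 (fun y => A y c d) x i * B x d b := by
  have hdiffA : ∀ c d, DifferentiableAt ℝ (fun y => A y c d) x :=
    fun c d => ((hA c d).differentiable (by simp)).differentiableAt
  have hdiffB : ∀ c d, DifferentiableAt ℝ (fun y => B y c d) x :=
    fun c d => ((hB c d).differentiable (by simp)).differentiableAt
  -- differentiate the constant ∑ A a c * B c b
  have key : ∀ a' b', ∑ c, (d1 (fun y => A y a' c) x i * B x c b'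
      + A x a' c * d1 (fun y => B y c b') x i) = 0 := by
    intro a' b'
    have hconst : ∀ y : Fin n → ℝ, ∑ c, A y a' c * B y c b' = (1 : Matrix (Fin k) (Fin k) ℝ) a' b' := by
      intro y
      have := congrArg (fun M => M a' b') (hl y)
      simpa [Matrix.mul_apply] using this
    have h0 : d1 (fun y => ∑ c, A y a' c * B y c b') x i = 0 :=
      d1_const_fun hconst x i
    rw [d1_sum Finset.univ (f := fun c y => A y a' c * B y c b') (fun c _ => ((hdiffA a' c).mul (hdiffB c b'))) i] at h0
    rw [← h0]
    exact Finset.sum_congr rfl fun c _ => (d1_mul (hdiffA a' c) (hdiffB c b') i).symm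
  -- solve for d1 B
  have key2 : ∀ c b', ∑ d, A x c d * d1 (fun y => B y d b') x i
      = -∑ d, d1 (fun y => A y c d) x i * B x d b' := by
    intro c b'
    have := key c b'
    rw [Finset.sum_add_distrib] at this
    linarith
  calc d1 (fun y => B y a b) x i
      = ∑ d, (if a = d then (1:ℝ) else 0) * d1 (fun y => B y d b) x i := by
        simp [ite_mul]
    _ = ∑ d, (∑ c, B x a c * A x c d) * d1 (fun y => B y d b) x i := by
        apply Finset.sum_congr rfl; intro d _
        have := congrArg (fun M => M a d) (hr x)
        simp only [Matrix.mul_apply] at this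
        rw [this, Matrix.one_apply]
    _ = ∑ c, B x a c * ∑ d, A x c d * d1 (fun y => B y d b) x i := by
        simp only [Finset.sum_mul, Finset.mul_sum, mul_assoc]
        exact Finset.sum_comm
    _ = ∑ c, -(B x a c * ∑ d, d1 (fun y => A y c d) x i * B x d b) := by
        exact Finset.sum_congr rfl fun c _ => by rw [key2 c b, mul_neg]
    _ = -∑ c, ∑ d, B x a c * d1 (fun y => A y c d) x i * B x d b := by
        rw [← Finset.sum_neg_distrib]
        refine Finset.sum_congr rfl fun c _ => ?_
        rw [Finset.mul_sum, ← Finset.sum_neg_distrib, ← Finset.sum_neg_distrib]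
        exact Finset.sum_congr rfl fun d _ => by ring

lemma mul3_apply {I J K L : Type*} [Fintype J] [Fintype K]
    (A : Matrix I J ℝ) (B : Matrix J K ℝ) (C : Matrix K L ℝ) (a : I) (d : L) :
    (A * B * C) a d = ∑ b, ∑ c, A a b * B b c * C c d := by
  simp only [Matrix.mul_apply, Finset.sum_mul, mul_assoc]
  exact Finset.sum_comm

lemma mul4_apply {I J K L M : Type*} [Fintype J] [Fintype K] [Fintype L]
    (A : Matrix I J ℝ) (B : Matrix J K ℝ) (C : Matrix K L ℝ) (D : Matrix L M ℝ) (a : I) (e : M) :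
    (A * B * C * D) a e = ∑ b, ∑ c, ∑ d, A a b * B b c * C c d * D d e := by
  calc (A * B * C * D) a e = ∑ d, (A * B * C) a d * D d e := Matrix.mul_apply
    _ = ∑ d, ∑ b, ∑ c, A a b * B b c * C c d * D d e := by
        refine Finset.sum_congr rfl fun d _ => ?_
        rw [mul3_apply, Finset.sum_mul]
        exact Finset.sum_congr rfl fun b _ => by rw [Finset.sum_mul]
    _ = ∑ b, ∑ c, ∑ d, A a b * B b c * C c d * D d e := by
        rw [Finset.sum_comm]
        exact Finset.sum_congr rfl fun b _ => Finset.sum_comm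

/-- entry of 5-fold product, with the sum order (b, e, c, d). -/
lemma mul5_apply {I J K L M N : Type*} [Fintype J] [Fintype K] [Fintype L] [Fintype M]
    (A : Matrix I J ℝ) (B : Matrix J K ℝ) (C : Matrix K L ℝ) (D : Matrix L M ℝ)
    (E : Matrix M N ℝ) (a : I) (f : N) :
    (A * B * C * D * E) a f
      = ∑ b, ∑ e, ∑ c, ∑ d, A a b * B b c * C c d * D d e * E e f := by
  calc (A * B * C * D * E) a f = ∑ e, (A * B * C * D) a e * E e f := Matrix.mul_apply
    _ = ∑ e, ∑ b, ∑ c, ∑ d, A a b * B b c * C c d * D d e * E e f := by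
        refine Finset.sum_congr rfl fun e _ => ?_
        rw [mul4_apply, Finset.sum_mul]
        refine Finset.sum_congr rfl fun b _ => ?_
        rw [Finset.sum_mul]
        exact Finset.sum_congr rfl fun c _ => by rw [Finset.sum_mul]
    _ = ∑ b, ∑ e, ∑ c, ∑ d, A a b * B b c * C c d * D d e * E e f := Finset.sum_comm

lemma matM1 {n : ℕ} (W P : Matrix (Fin n) (Fin n) ℝ) (hW : Wᵀ = -W) :
    -(W * (P - Pᵀ) * W) = -((W * P) * W + W * (W * P)ᵀ) := by
  rw [Matrix.transpose_mul, hW]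
  noncomm_ring

lemma matM2 {n m : ℕ} (W G : Matrix (Fin n) (Fin n) ℝ) (Θ D2 : Matrix (Fin n) (Fin m) ℝ) :
    (-(G * W + W * Gᵀ)) * Θ + W * D2 = -(G * (W * Θ)) + W * (D2 - Gᵀ * Θ) := by
  simp only [Matrix.add_mul, Matrix.mul_add, Matrix.sub_mul, Matrix.mul_sub,
    Matrix.neg_mul, Matrix.mul_neg, Matrix.mul_assoc, neg_neg, neg_add]
  abel

lemma matM3 {n m : ℕ} (W G : Matrix (Fin n) (Fin n) ℝ) (Θ D2 : Matrix (Fin n) (Fin m) ℝ)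
    (hW : Wᵀ = -W) :
    D2ᵀ * W * Θ + Θᵀ * (-(G * W + W * Gᵀ)) * Θ + Θᵀ * W * D2
      = (D2 - Gᵀ * Θ)ᵀ * (W * Θ) - (W * Θ)ᵀ * (D2 - Gᵀ * Θ) := by
  simp only [Matrix.transpose_sub, Matrix.transpose_mul, Matrix.transpose_transpose, hW,
    Matrix.add_mul, Matrix.mul_add, Matrix.sub_mul, Matrix.mul_sub,
    Matrix.neg_mul, Matrix.mul_neg, Matrix.mul_assoc, neg_neg, neg_add]
  abel

lemma matM0 {n m : ℕ} (W : Matrix (Fin n) (Fin n) ℝ) (Θ : Matrix (Fin n) (Fin m) ℝ)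
    (Δ : Matrix (Fin m) (Fin m) ℝ) (hW : Wᵀ = -W) :
    W * Θ * Δ * Θᵀ * W = -(W * Θ * Δ * (W * Θ)ᵀ) := by
  rw [Matrix.transpose_mul, hW]
  simp only [Matrix.mul_neg, Matrix.neg_mul, neg_neg, Matrix.mul_assoc]

lemma matM4 {n m : ℕ} (W G : Matrix (Fin n) (Fin n) ℝ) (T N : Matrix (Fin n) (Fin m) ℝ)
    (Δ : Matrix (Fin m) (Fin m) ℝ) (hW : Wᵀ = -W) (hΔ : Δᵀ = -Δ) :
    -(G * W + W * Gᵀ)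
      + ((-(G * T) + W * N) * Δ * Tᵀ
        + T * (-(Δ * (Nᵀ * T - Tᵀ * N) * Δ)) * Tᵀ
        + T * Δ * (-(G * T) + W * N)ᵀ)
      + (G + T * Δ * Nᵀ) * (W + T * Δ * Tᵀ)
      + (W + T * Δ * Tᵀ) * (G + T * Δ * Nᵀ)ᵀ = 0 := by
  simp only [Matrix.transpose_add, Matrix.transpose_neg, Matrix.transpose_mul,
    Matrix.transpose_sub, Matrix.transpose_transpose, hW, hΔ,
    Matrix.add_mul, Matrix.mul_add, Matrix.sub_mul, Matrix.mul_sub,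
    Matrix.neg_mul, Matrix.mul_neg, Matrix.mul_assoc, neg_neg, neg_add]
  abel


private noncomputable def Γmat {n : ℕ} (Γl : (Fin n → ℝ) → Fin n → Fin n → Fin n → ℝ)
    (x : Fin n → ℝ) (i : Fin n) : Matrix (Fin n) (Fin n) ℝ :=
  Matrix.of fun c d => Γl x c i d

@[simp] private lemma Γmat_apply {n : ℕ} (Γl : (Fin n → ℝ) → Fin n → Fin n → Fin n → ℝ)
    (x : Fin n → ℝ) (i c d : Fin n) : Γmat Γl x i c d = Γl x c i d := rfl

private noncomputable def Θmat {n m : ℕ} (θ : Fin m → (Fin n → ℝ) → ℝ)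
    (x : Fin n → ℝ) : Matrix (Fin n) (Fin m) ℝ :=
  Matrix.of fun l α => d1 (θ α) x l

@[simp] private lemma Θmat_apply {n m : ℕ} (θ : Fin m → (Fin n → ℝ) → ℝ)
    (x : Fin n → ℝ) (l : Fin n) (α : Fin m) : Θmat θ x l α = d1 (θ α) x l := rfl

private noncomputable def D2mat {n m : ℕ} (θ : Fin m → (Fin n → ℝ) → ℝ)
    (x : Fin n → ℝ) (i : Fin n) : Matrix (Fin n) (Fin m) ℝ :=
  Matrix.of fun l α => d2 (θ α) x i l

@[simp] private lemma D2mat_apply {n m : ℕ} (θ : Fin m → (Fin n → ℝ) → ℝ)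
    (x : Fin n → ℝ) (i l : Fin n) (α : Fin m) : D2mat θ x i l α = d2 (θ α) x i l := rfl

private noncomputable def Δmat {n m : ℕ} (Δinv : (Fin n → ℝ) → Fin m → Fin m → ℝ)
    (x : Fin n → ℝ) : Matrix (Fin m) (Fin m) ℝ :=
  Matrix.of fun α β => Δinv x α β

@[simp] private lemma Δmat_apply {n m : ℕ} (Δinv : (Fin n → ℝ) → Fin m → Fin m → ℝ)
    (x : Fin n → ℝ) (α β : Fin m) : Δmat Δinv x α β = Δinv x α β := rfl

private noncomputable def DMmat {n m : ℕ} (ωinv : (Fin n → ℝ) → Matrix (Fin n) (Fin n) ℝ)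
    (θ : Fin m → (Fin n → ℝ) → ℝ) (x : Fin n → ℝ) : Matrix (Fin m) (Fin m) ℝ :=
  Matrix.of fun α β => diracMat ωinv θ x α β

@[simp] private lemma DMmat_apply {n m : ℕ} (ωinv : (Fin n → ℝ) → Matrix (Fin n) (Fin n) ℝ)
    (θ : Fin m → (Fin n → ℝ) → ℝ) (x : Fin n → ℝ) (α β : Fin m) :
    DMmat ωinv θ x α β = diracMat ωinv θ x α β := rfl

/-- The Dirac connection preserves the Dirac bivector:
`∇̄_i D^{jk} = ∂_i D^{jk} + Γ̄^j_{il} D^{lk} + Γ̄^k_{il} D^{jl} = 0`. -/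
theorem diracConnection_preserves_diracBivec {n m : ℕ}
    (ω ωinv : (Fin n → ℝ) → Matrix (Fin n) (Fin n) ℝ)
    (hω : ∀ i j, ContDiff ℝ (⊤ : ℕ∞) (fun x => ω x i j))
    (hωinv' : ∀ i j, ContDiff ℝ (⊤ : ℕ∞) (fun x => ωinv x i j))
    (hanti : ∀ x, (ω x)ᵀ = -ω x)
    (hωinv : ∀ x, ω x * ωinv x = 1 ∧ ωinv x * ω x = 1)
    (Γl : (Fin n → ℝ) → Fin n → Fin n → Fin n → ℝ)
    (hΓsmooth : ∀ l i j, ContDiff ℝ (⊤ : ℕ∞) (fun x => Γl x l i j))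
    (hΓsym : ∀ x l i j, Γl x l i j = Γl x l j i)
    (hΓcompat : ∀ x i j k, d1 (fun y => ω y i k) x j - Γl x i j k + Γl x k j i = 0)
    (θ : Fin m → (Fin n → ℝ) → ℝ)
    (hθ : ∀ α, ContDiff ℝ (⊤ : ℕ∞) (θ α))
    (Δinv : (Fin n → ℝ) → Fin m → Fin m → ℝ)
    (hΔsmooth : ∀ α β, ContDiff ℝ (⊤ : ℕ∞) (fun x => Δinv x α β))
    (hΔl : ∀ x α β, ∑ γ, Δinv x α γ * diracMat ωinv θ x γ β = if α = β then 1 else 0)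
    (hΔr : ∀ x α β, ∑ γ, diracMat ωinv θ x α γ * Δinv x γ β = if α = β then 1 else 0) :
    ∀ (x : Fin n → ℝ) (i j k : Fin n),
      d1 (fun y => diracBivec ωinv θ Δinv y j k) x i
        + ∑ l, diracChris ωinv Γl θ Δinv x j i l * diracBivec ωinv θ Δinv x l k
        + ∑ l, diracChris ωinv Γl θ Δinv x k i l * diracBivec ωinv θ Δinv x j l = 0 := by
  intro x i j k
  have hdiffat : ∀ {f : (Fin n → ℝ) → ℝ}, ContDiff ℝ (⊤ : ℕ∞) f → ∀ y, DifferentiableAt ℝ f y :=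
    fun h y => (h.differentiable (by simp)).differentiableAt
  have hθ1 : ∀ (α : Fin m) (l : Fin n), ContDiff ℝ (⊤ : ℕ∞) fun y => d1 (θ α) y l :=
    fun α l => contDiff_d1 (hθ α) l
  have hTfsm : ∀ (a : Fin n) (α : Fin m),
      ContDiff ℝ (⊤ : ℕ∞) fun y => ∑ l, ωinv y a l * d1 (θ α) y l :=
    fun a α => ContDiff.sum fun l _ => (hωinv' a l).mul (hθ1 α l)
  have hDMsm : ∀ (γ δ : Fin m), ContDiff ℝ (⊤ : ℕ∞) fun y => diracMat ωinv θ y γ δ := by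
    intro γ δ
    have h0 : (fun y => diracMat ωinv θ y γ δ)
        = fun y => ∑ a, ∑ b, d1 (θ γ) y a * ωinv y a b * d1 (θ δ) y b := rfl
    rw [h0]
    exact ContDiff.sum fun a _ => ContDiff.sum fun b _ =>
      ((hθ1 γ a).mul (hωinv' a b)).mul (hθ1 δ b)
  -- antisymmetry of ωinv
  have hWa : ∀ y, (ωinv y)ᵀ = -ωinv y := fun y => inv_antisym (hanti y) (hωinv y).1 (hωinv y).2
  have hWae : ∀ (y : Fin n → ℝ) (a b : Fin n), ωinv y b a = -ωinv y a b := by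
    intro y a b
    have h := congrArg (fun M => M a b) (hWa y)
    simpa [Matrix.transpose_apply] using h
  -- the Dirac matrix as a matrix family, with its inverse identities
  have hDMl : ∀ y, DMmat ωinv θ y * Δmat Δinv y = 1 := by
    intro y
    ext a b
    rw [Matrix.mul_apply, Matrix.one_apply]
    simpa using hΔr y a b
  have hDMr : ∀ y, Δmat Δinv y * DMmat ωinv θ y = 1 := by
    intro y
    ext a b
    rw [Matrix.mul_apply, Matrix.one_apply]
    simpa using hΔl y a b
  have hDMa : ∀ y, (DMmat ωinv θ y)ᵀ = -(DMmat ωinv θ y) := by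
    intro y
    ext a b
    simp only [Matrix.transpose_apply, DMmat_apply, Matrix.neg_apply]
    unfold diracMat
    rw [Finset.sum_comm, ← Finset.sum_neg_distrib]
    refine Finset.sum_congr rfl fun p _ => ?_
    rw [← Finset.sum_neg_distrib]
    refine Finset.sum_congr rfl fun q _ => ?_
    rw [hWae y p q]
    ring
  have hΔa : (Δmat Δinv x)ᵀ = -(Δmat Δinv x) := inv_antisym (hDMa x) (hDMl x) (hDMr x)
  -- derivative of ω entries via compatibility
  have hdωe : ∀ c d : Fin n, d1 (fun y => ω y c d) x i = (Γmat Γl x i - (Γmat Γl x i)ᵀ) c d := by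
    intro c d
    have h := hΓcompat x c i d
    simp only [Matrix.sub_apply, Matrix.transpose_apply, Γmat_apply]
    linarith
  -- derivative of ωinv entries
  have hdWe : ∀ a b : Fin n, d1 (fun y => ωinv y a b) x i
      = (-(ωinv x * (Γmat Γl x i - (Γmat Γl x i)ᵀ) * ωinv x)) a b := by
    intro a b
    rw [d1_inv_entries ω ωinv hω hωinv' (fun y => (hωinv y).1) (fun y => (hωinv y).2) x i a b]
    rw [Matrix.neg_apply, mul3_apply (ωinv x) (Γmat Γl x i - (Γmat Γl x i)ᵀ) (ωinv x) a b]
    refine congrArg Neg.neg (Finset.sum_congr rfl fun c _ => Finset.sum_congr rfl fun d _ => ?_)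
    rw [hdωe c d]
  have hdWe2 : ∀ a b : Fin n, d1 (fun y => ωinv y a b) x i = ((-((ωinv x * Γmat Γl x i) * ωinv x + ωinv x * (ωinv x * Γmat Γl x i)ᵀ))) a b := by
    intro a b
    rw [hdWe a b, matM1 (ωinv x) (Γmat Γl x i) (hWa x)]
  -- entries of T
  have hTme : ∀ (y : Fin n → ℝ) (a : Fin n) (α : Fin m),
      (∑ l, ωinv y a l * d1 (θ α) y l) = (ωinv y * Θmat θ y) a α := by
    intro y a α
    rw [Matrix.mul_apply]
    exact Finset.sum_congr rfl fun l _ => rfl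
  have hd2e : ∀ (α : Fin m) (l : Fin n), d1 (fun y => d1 (θ α) y l) x i = d2 (θ α) x i l :=
    fun α l => rfl
  -- derivative of T entries
  have hdTe : ∀ (a : Fin n) (α : Fin m),
      d1 (fun y => ∑ l, ωinv y a l * d1 (θ α) y l) x i = ((-((ωinv x * Γmat Γl x i) * (ωinv x * Θmat θ x)) + ωinv x * (D2mat θ x i - (ωinv x * Γmat Γl x i)ᵀ * Θmat θ x))) a α := by
    intro a α
    have hh : d1 (fun y => ∑ l, ωinv y a l * d1 (θ α) y l) x i
        = ∑ l, d1 (fun y => ωinv y a l * d1 (θ α) y l) x i :=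
      d1_sum Finset.univ (fun l _ => (hdiffat (hωinv' a l) x).mul (hdiffat (hθ1 α l) x)) i
    rw [hh]
    have step : ∀ l : Fin n, d1 (fun y => ωinv y a l * d1 (θ α) y l) x i
        = ((-((ωinv x * Γmat Γl x i) * ωinv x + ωinv x * (ωinv x * Γmat Γl x i)ᵀ))) a l * Θmat θ x l α + ωinv x a l * D2mat θ x i l α := by
      intro l
      have hm : d1 (fun y => ωinv y a l * d1 (θ α) y l) x i
          = d1 (fun y => ωinv y a l) x i * d1 (θ α) x l
            + ωinv x a l * d1 (fun y => d1 (θ α) y l) x i :=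
        d1_mul (hdiffat (hωinv' a l) x) (hdiffat (hθ1 α l) x) i
      rw [hm, hdWe2 a l, hd2e α l]
      simp only [Θmat_apply, D2mat_apply]
    calc ∑ l, d1 (fun y => ωinv y a l * d1 (θ α) y l) x i
        = ∑ l, (((-((ωinv x * Γmat Γl x i) * ωinv x + ωinv x * (ωinv x * Γmat Γl x i)ᵀ))) a l * Θmat θ x l α + ωinv x a l * D2mat θ x i l α) :=
          Finset.sum_congr rfl fun l _ => step l
      _ = ((-((ωinv x * Γmat Γl x i) * ωinv x + ωinv x * (ωinv x * Γmat Γl x i)ᵀ)) * Θmat θ x) a α + (ωinv x * D2mat θ x i) a α := by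
          rw [Finset.sum_add_distrib,
            Matrix.mul_apply (M := ((-((ωinv x * Γmat Γl x i) * ωinv x + ωinv x * (ωinv x * Γmat Γl x i)ᵀ)))) (N := Θmat θ x) (i := a) (k := α),
            Matrix.mul_apply (M := (ωinv x)) (N := D2mat θ x i) (i := a) (k := α)]
      _ = ((-((ωinv x * Γmat Γl x i) * (ωinv x * Θmat θ x)) + ωinv x * (D2mat θ x i - (ωinv x * Γmat Γl x i)ᵀ * Θmat θ x))) a α := by
          have h2 := congrArg (fun M => M a α) (matM2 (ωinv x) ((ωinv x * Γmat Γl x i)) (Θmat θ x) (D2mat θ x i))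
          simp only [Matrix.add_apply] at h2
          rw [Matrix.add_apply]
          exact h2
  -- derivative of the Dirac-matrix entries
  have hDMterm : ∀ (γ δ : Fin m) (a b : Fin n),
      d1 (fun y => d1 (θ γ) y a * ωinv y a b * d1 (θ δ) y b) x i
      = (D2mat θ x i)ᵀ γ a * ωinv x a b * Θmat θ x b δ + (Θmat θ x)ᵀ γ a * ((-((ωinv x * Γmat Γl x i) * ωinv x + ωinv x * (ωinv x * Γmat Γl x i)ᵀ))) a b * Θmat θ x b δ
        + (Θmat θ x)ᵀ γ a * ωinv x a b * D2mat θ x i b δ := by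
    intro γ δ a b
    have h1 : d1 (fun y => d1 (θ γ) y a * ωinv y a b * d1 (θ δ) y b) x i
        = d1 (fun y => d1 (θ γ) y a * ωinv y a b) x i * d1 (θ δ) x b
          + (d1 (θ γ) x a * ωinv x a b) * d1 (fun y => d1 (θ δ) y b) x i :=
      d1_mul ((hdiffat (hθ1 γ a) x).mul (hdiffat (hωinv' a b) x)) (hdiffat (hθ1 δ b) x) i
    have h2 : d1 (fun y => d1 (θ γ) y a * ωinv y a b) x i
        = d1 (fun y => d1 (θ γ) y a) x i * ωinv x a b
          + d1 (θ γ) x a * d1 (fun y => ωinv y a b) x i :=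
      d1_mul (hdiffat (hθ1 γ a) x) (hdiffat (hωinv' a b) x) i
    rw [h1, h2, hdWe2 a b, hd2e γ a, hd2e δ b]
    simp only [Matrix.transpose_apply, Θmat_apply, D2mat_apply]
    ring
  have hdDMe : ∀ γ δ : Fin m, d1 (fun y => DMmat ωinv θ y γ δ) x i = (((D2mat θ x i - (ωinv x * Γmat Γl x i)ᵀ * Θmat θ x)ᵀ * (ωinv x * Θmat θ x) - (ωinv x * Θmat θ x)ᵀ * (D2mat θ x i - (ωinv x * Γmat Γl x i)ᵀ * Θmat θ x))) γ δ := by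
    intro γ δ
    have h0 : d1 (fun y => DMmat ωinv θ y γ δ) x i
        = ∑ a, d1 (fun y => ∑ b, d1 (θ γ) y a * ωinv y a b * d1 (θ δ) y b) x i :=
      d1_sum Finset.univ (fun a _ => hdiffat (ContDiff.sum fun b _ =>
        ((hθ1 γ a).mul (hωinv' a b)).mul (hθ1 δ b)) x) i
    rw [h0]
    calc ∑ a, d1 (fun y => ∑ b, d1 (θ γ) y a * ωinv y a b * d1 (θ δ) y b) x i
        = ∑ a, ∑ b, d1 (fun y => d1 (θ γ) y a * ωinv y a b * d1 (θ δ) y b) x i :=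
          Finset.sum_congr rfl fun a _ => d1_sum Finset.univ (fun b _ =>
            ((hdiffat (hθ1 γ a) x).mul (hdiffat (hωinv' a b) x)).mul (hdiffat (hθ1 δ b) x)) i
      _ = ∑ a, ∑ b, ((D2mat θ x i)ᵀ γ a * ωinv x a b * Θmat θ x b δ + (Θmat θ x)ᵀ γ a * ((-((ωinv x * Γmat Γl x i) * ωinv x + ωinv x * (ωinv x * Γmat Γl x i)ᵀ))) a b * Θmat θ x b δ
            + (Θmat θ x)ᵀ γ a * ωinv x a b * D2mat θ x i b δ) :=
          Finset.sum_congr rfl fun a _ => Finset.sum_congr rfl fun b _ => hDMterm γ δ a b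
      _ = ((D2mat θ x i)ᵀ * ωinv x * Θmat θ x) γ δ + ((Θmat θ x)ᵀ * ((-((ωinv x * Γmat Γl x i) * ωinv x + ωinv x * (ωinv x * Γmat Γl x i)ᵀ))) * Θmat θ x) γ δ
            + ((Θmat θ x)ᵀ * ωinv x * D2mat θ x i) γ δ := by
          simp only [Finset.sum_add_distrib]
          rw [mul3_apply ((D2mat θ x i)ᵀ) (ωinv x) (Θmat θ x) γ δ, mul3_apply ((Θmat θ x)ᵀ) ((-((ωinv x * Γmat Γl x i) * ωinv x + ωinv x * (ωinv x * Γmat Γl x i)ᵀ))) (Θmat θ x) γ δ,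
            mul3_apply ((Θmat θ x)ᵀ) (ωinv x) (D2mat θ x i) γ δ]
      _ = (((D2mat θ x i - (ωinv x * Γmat Γl x i)ᵀ * Θmat θ x)ᵀ * (ωinv x * Θmat θ x) - (ωinv x * Θmat θ x)ᵀ * (D2mat θ x i - (ωinv x * Γmat Γl x i)ᵀ * Θmat θ x))) γ δ := by
          have h2 := congrArg (fun M => M γ δ) (matM3 (ωinv x) ((ωinv x * Γmat Γl x i)) (Θmat θ x) (D2mat θ x i) (hWa x))
          simp only [Matrix.add_apply] at h2
          exact h2
  -- derivative of Δinv entries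
  have hdΔe : ∀ α β : Fin m, d1 (fun y => Δinv y α β) x i = ((-(Δmat Δinv x * ((D2mat θ x i - (ωinv x * Γmat Γl x i)ᵀ * Θmat θ x)ᵀ * (ωinv x * Θmat θ x) - (ωinv x * Θmat θ x)ᵀ * (D2mat θ x i - (ωinv x * Γmat Γl x i)ᵀ * Θmat θ x)) * Δmat Δinv x))) α β := by
    intro α β
    have h : d1 (fun y => Δinv y α β) x i
        = -∑ γ, ∑ δ, Δmat Δinv x α γ * d1 (fun y => DMmat ωinv θ y γ δ) x i
            * Δmat Δinv x δ β :=
      d1_inv_entries (fun y => DMmat ωinv θ y) (fun y => Δmat Δinv y)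
        (fun a b => hDMsm a b) (fun a b => hΔsmooth a b) hDMl hDMr x i α β
    rw [h, Matrix.neg_apply, mul3_apply (Δmat Δinv x) (((D2mat θ x i - (ωinv x * Γmat Γl x i)ᵀ * Θmat θ x)ᵀ * (ωinv x * Θmat θ x) - (ωinv x * Θmat θ x)ᵀ * (D2mat θ x i - (ωinv x * Γmat Γl x i)ᵀ * Θmat θ x))) (Δmat Δinv x) α β]
    refine congrArg Neg.neg (Finset.sum_congr rfl fun γ _ => Finset.sum_congr rfl fun δ _ => ?_)
    rw [hdDMe γ δ]
  -- the Dirac bivector rewritten via T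
  have B5a : ∀ (y : Fin n → ℝ) (a b : Fin n), diracBivec ωinv θ Δinv y a b
      = ωinv y a b + ∑ α, ∑ β, (∑ l, ωinv y a l * d1 (θ α) y l) * Δinv y α β
          * (∑ p, ωinv y b p * d1 (θ β) y p) := by
    intro y a b
    have h5 : ∑ l, ∑ p, ∑ α, ∑ β,
        ωinv y a l * d1 (θ α) y l * Δinv y α β * d1 (θ β) y p * ωinv y p b
        = (ωinv y * Θmat θ y * Δmat Δinv y * (Θmat θ y)ᵀ * ωinv y) a b := by
      rw [mul5_apply (ωinv y) (Θmat θ y) (Δmat Δinv y) ((Θmat θ y)ᵀ) (ωinv y) a b]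
      refine Finset.sum_congr rfl fun l _ => Finset.sum_congr rfl fun p _ =>
        Finset.sum_congr rfl fun α _ => Finset.sum_congr rfl fun β _ => ?_
      simp only [Θmat_apply, Δmat_apply, Matrix.transpose_apply]
    have h3 : ∑ α, ∑ β, (∑ l, ωinv y a l * d1 (θ α) y l) * Δinv y α β
        * (∑ p, ωinv y b p * d1 (θ β) y p)
        = ((ωinv y * Θmat θ y) * Δmat Δinv y * (ωinv y * Θmat θ y)ᵀ) a b := by
      rw [mul3_apply (ωinv y * Θmat θ y) (Δmat Δinv y) ((ωinv y * Θmat θ y)ᵀ) a b]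
      refine Finset.sum_congr rfl fun α _ => Finset.sum_congr rfl fun β _ => ?_
      rw [Matrix.transpose_apply, ← hTme y a α, ← hTme y b β]
      simp only [Δmat_apply]
    unfold diracBivec
    rw [h5, h3, matM0 (ωinv y) (Θmat θ y) (Δmat Δinv y) (hWa y), Matrix.neg_apply,
      sub_neg_eq_add]
  -- rewrite the function being differentiated
  have hbigsm : ContDiff ℝ (⊤ : ℕ∞) fun y => ∑ α, ∑ β, (∑ l, ωinv y j l * d1 (θ α) y l)
      * Δinv y α β * (∑ p, ωinv y k p * d1 (θ β) y p) :=
    ContDiff.sum fun α _ => ContDiff.sum fun β _ =>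
      ((hTfsm j α).mul (hΔsmooth α β)).mul (hTfsm k β)
  have hfun : (fun y => diracBivec ωinv θ Δinv y j k)
      = fun y => ωinv y j k + ∑ α, ∑ β, (∑ l, ωinv y j l * d1 (θ α) y l) * Δinv y α β
          * (∑ p, ωinv y k p * d1 (θ β) y p) :=
    funext fun y => B5a y j k
  rw [hfun]
  have hadd : d1 (fun y => ωinv y j k + ∑ α, ∑ β, (∑ l, ωinv y j l * d1 (θ α) y l)
      * Δinv y α β * (∑ p, ωinv y k p * d1 (θ β) y p)) x i
      = d1 (fun y => ωinv y j k) x i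
        + d1 (fun y => ∑ α, ∑ β, (∑ l, ωinv y j l * d1 (θ α) y l) * Δinv y α β
            * (∑ p, ωinv y k p * d1 (θ β) y p)) x i :=
    d1_add (hdiffat (hωinv' j k) x) (hdiffat hbigsm x) i
  rw [hadd, hdWe2 j k]
  have hsumd : d1 (fun y => ∑ α, ∑ β, (∑ l, ωinv y j l * d1 (θ α) y l) * Δinv y α β
      * (∑ p, ωinv y k p * d1 (θ β) y p)) x i
      = ∑ α, ∑ β, d1 (fun y => (∑ l, ωinv y j l * d1 (θ α) y l) * Δinv y α β
          * (∑ p, ωinv y k p * d1 (θ β) y p)) x i := by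
    have h1 : d1 (fun y => ∑ α, ∑ β, (∑ l, ωinv y j l * d1 (θ α) y l) * Δinv y α β
        * (∑ p, ωinv y k p * d1 (θ β) y p)) x i
        = ∑ α, d1 (fun y => ∑ β, (∑ l, ωinv y j l * d1 (θ α) y l) * Δinv y α β
            * (∑ p, ωinv y k p * d1 (θ β) y p)) x i :=
      d1_sum Finset.univ (fun α _ => hdiffat (ContDiff.sum fun β _ =>
        ((hTfsm j α).mul (hΔsmooth α β)).mul (hTfsm k β)) x) i
    rw [h1]
    exact Finset.sum_congr rfl fun α _ => d1_sum Finset.univ (fun β _ =>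
      ((hdiffat (hTfsm j α) x).mul (hdiffat (hΔsmooth α β) x)).mul (hdiffat (hTfsm k β) x)) i
  rw [hsumd]
  have hterm : ∀ α β : Fin m, d1 (fun y => (∑ l, ωinv y j l * d1 (θ α) y l) * Δinv y α β
      * (∑ p, ωinv y k p * d1 (θ β) y p)) x i
      = ((-((ωinv x * Γmat Γl x i) * (ωinv x * Θmat θ x)) + ωinv x * (D2mat θ x i - (ωinv x * Γmat Γl x i)ᵀ * Θmat θ x))) j α * Δmat Δinv x α β * ((ωinv x * Θmat θ x))ᵀ β k + ((ωinv x * Θmat θ x)) j α * ((-(Δmat Δinv x * ((D2mat θ x i - (ωinv x * Γmat Γl x i)ᵀ * Θmat θ x)ᵀ * (ωinv x * Θmat θ x) - (ωinv x * Θmat θ x)ᵀ * (D2mat θ x i - (ωinv x * Γmat Γl x i)ᵀ * Θmat θ x)) * Δmat Δinv x))) α β * ((ωinv x * Θmat θ x))ᵀ β k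
        + ((ωinv x * Θmat θ x)) j α * Δmat Δinv x α β * ((-((ωinv x * Γmat Γl x i) * (ωinv x * Θmat θ x)) + ωinv x * (D2mat θ x i - (ωinv x * Γmat Γl x i)ᵀ * Θmat θ x)))ᵀ β k := by
    intro α β
    have h1 : d1 (fun y => (∑ l, ωinv y j l * d1 (θ α) y l) * Δinv y α β
        * (∑ p, ωinv y k p * d1 (θ β) y p)) x i
        = d1 (fun y => (∑ l, ωinv y j l * d1 (θ α) y l) * Δinv y α β) x i
            * (∑ p, ωinv x k p * d1 (θ β) x p)
          + ((∑ l, ωinv x j l * d1 (θ α) x l) * Δinv x α β)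
            * d1 (fun y => ∑ p, ωinv y k p * d1 (θ β) y p) x i :=
      d1_mul ((hdiffat (hTfsm j α) x).mul (hdiffat (hΔsmooth α β) x)) (hdiffat (hTfsm k β) x) i
    have h2 : d1 (fun y => (∑ l, ωinv y j l * d1 (θ α) y l) * Δinv y α β) x i
        = d1 (fun y => ∑ l, ωinv y j l * d1 (θ α) y l) x i * Δinv x α β
          + (∑ l, ωinv x j l * d1 (θ α) x l) * d1 (fun y => Δinv y α β) x i :=
      d1_mul (hdiffat (hTfsm j α) x) (hdiffat (hΔsmooth α β) x) i
    rw [h1, h2, hdTe j α, hdTe k β, hdΔe α β, hTme x j α, hTme x k β]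
    simp only [Matrix.transpose_apply, Δmat_apply]
    ring
  have hsum_eq : ∑ α, ∑ β, d1 (fun y => (∑ l, ωinv y j l * d1 (θ α) y l) * Δinv y α β
      * (∑ p, ωinv y k p * d1 (θ β) y p)) x i
      = (((-((ωinv x * Γmat Γl x i) * (ωinv x * Θmat θ x)) + ωinv x * (D2mat θ x i - (ωinv x * Γmat Γl x i)ᵀ * Θmat θ x))) * Δmat Δinv x * ((ωinv x * Θmat θ x))ᵀ) j k + (((ωinv x * Θmat θ x)) * ((-(Δmat Δinv x * ((D2mat θ x i - (ωinv x * Γmat Γl x i)ᵀ * Θmat θ x)ᵀ * (ωinv x * Θmat θ x) - (ωinv x * Θmat θ x)ᵀ * (D2mat θ x i - (ωinv x * Γmat Γl x i)ᵀ * Θmat θ x)) * Δmat Δinv x))) * ((ωinv x * Θmat θ x))ᵀ) j k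
        + (((ωinv x * Θmat θ x)) * Δmat Δinv x * ((-((ωinv x * Γmat Γl x i) * (ωinv x * Θmat θ x)) + ωinv x * (D2mat θ x i - (ωinv x * Γmat Γl x i)ᵀ * Θmat θ x)))ᵀ) j k := by
    calc ∑ α, ∑ β, d1 (fun y => (∑ l, ωinv y j l * d1 (θ α) y l) * Δinv y α β
        * (∑ p, ωinv y k p * d1 (θ β) y p)) x i
        = ∑ α, ∑ β, (((-((ωinv x * Γmat Γl x i) * (ωinv x * Θmat θ x)) + ωinv x * (D2mat θ x i - (ωinv x * Γmat Γl x i)ᵀ * Θmat θ x))) j α * Δmat Δinv x α β * ((ωinv x * Θmat θ x))ᵀ β k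
            + ((ωinv x * Θmat θ x)) j α * ((-(Δmat Δinv x * ((D2mat θ x i - (ωinv x * Γmat Γl x i)ᵀ * Θmat θ x)ᵀ * (ωinv x * Θmat θ x) - (ωinv x * Θmat θ x)ᵀ * (D2mat θ x i - (ωinv x * Γmat Γl x i)ᵀ * Θmat θ x)) * Δmat Δinv x))) α β * ((ωinv x * Θmat θ x))ᵀ β k
            + ((ωinv x * Θmat θ x)) j α * Δmat Δinv x α β * ((-((ωinv x * Γmat Γl x i) * (ωinv x * Θmat θ x)) + ωinv x * (D2mat θ x i - (ωinv x * Γmat Γl x i)ᵀ * Θmat θ x)))ᵀ β k) :=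
          Finset.sum_congr rfl fun α _ => Finset.sum_congr rfl fun β _ => hterm α β
      _ = (((-((ωinv x * Γmat Γl x i) * (ωinv x * Θmat θ x)) + ωinv x * (D2mat θ x i - (ωinv x * Γmat Γl x i)ᵀ * Θmat θ x))) * Δmat Δinv x * ((ωinv x * Θmat θ x))ᵀ) j k + (((ωinv x * Θmat θ x)) * ((-(Δmat Δinv x * ((D2mat θ x i - (ωinv x * Γmat Γl x i)ᵀ * Θmat θ x)ᵀ * (ωinv x * Θmat θ x) - (ωinv x * Θmat θ x)ᵀ * (D2mat θ x i - (ωinv x * Γmat Γl x i)ᵀ * Θmat θ x)) * Δmat Δinv x))) * ((ωinv x * Θmat θ x))ᵀ) j k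
            + (((ωinv x * Θmat θ x)) * Δmat Δinv x * ((-((ωinv x * Γmat Γl x i) * (ωinv x * Θmat θ x)) + ωinv x * (D2mat θ x i - (ωinv x * Γmat Γl x i)ᵀ * Θmat θ x)))ᵀ) j k := by
          simp only [Finset.sum_add_distrib]
          rw [mul3_apply ((-((ωinv x * Γmat Γl x i) * (ωinv x * Θmat θ x)) + ωinv x * (D2mat θ x i - (ωinv x * Γmat Γl x i)ᵀ * Θmat θ x))) (Δmat Δinv x) (((ωinv x * Θmat θ x))ᵀ) j k, mul3_apply ((ωinv x * Θmat θ x)) ((-(Δmat Δinv x * ((D2mat θ x i - (ωinv x * Γmat Γl x i)ᵀ * Θmat θ x)ᵀ * (ωinv x * Θmat θ x) - (ωinv x * Θmat θ x)ᵀ * (D2mat θ x i - (ωinv x * Γmat Γl x i)ᵀ * Θmat θ x)) * Δmat Δinv x))) (((ωinv x * Θmat θ x))ᵀ) j k,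
            mul3_apply ((ωinv x * Θmat θ x)) (Δmat Δinv x) (((-((ωinv x * Γmat Γl x i) * (ωinv x * Θmat θ x)) + ωinv x * (D2mat θ x i - (ωinv x * Γmat Γl x i)ᵀ * Θmat θ x)))ᵀ) j k]
  rw [hsum_eq]
  -- values of diracChris and diracBivec as matrix entries
  have hchm : ∀ a b : Fin n, chris ωinv Γl x a i b = ((ωinv x * Γmat Γl x i)) a b := by
    intro a b
    rw [Matrix.mul_apply]
    exact Finset.sum_congr rfl fun l _ => rfl
  have hna : ∀ (a : Fin n) (α : Fin m), nabla2 ωinv Γl (θ α) x i a = ((D2mat θ x i - (ωinv x * Γmat Γl x i)ᵀ * Θmat θ x)) a α := by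
    intro a α
    unfold nabla2
    rw [Matrix.sub_apply]
    congr 1
  have hDC : ∀ a b : Fin n, diracChris ωinv Γl θ Δinv x a i b = (((ωinv x * Γmat Γl x i)) + ((ωinv x * Θmat θ x) * Δmat Δinv x * (D2mat θ x i - (ωinv x * Γmat Γl x i)ᵀ * Θmat θ x)ᵀ)) a b := by
    intro a b
    have hsplit : diracChris ωinv Γl θ Δinv x a i b
        = (∑ l, ωinv x a l * Γl x l i b)
          + ∑ l, ∑ β, ∑ α, ωinv x a l * Θmat θ x l β * Δmat Δinv x β α * ((D2mat θ x i - (ωinv x * Γmat Γl x i)ᵀ * Θmat θ x))ᵀ α b := by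
      unfold diracChris
      rw [← Finset.sum_add_distrib]
      refine Finset.sum_congr rfl fun l _ => ?_
      rw [mul_add]
      congr 1
      rw [Finset.mul_sum]
      refine Finset.sum_congr rfl fun β _ => ?_
      rw [Finset.mul_sum]
      refine Finset.sum_congr rfl fun α _ => ?_
      rw [Matrix.transpose_apply, ← hna b α]
      simp only [Θmat_apply, Δmat_apply]
      ring
    have e1 : (∑ l, ωinv x a l * Γl x l i b) = ((ωinv x * Γmat Γl x i)) a b := by
      rw [Matrix.mul_apply]
      exact Finset.sum_congr rfl fun l _ => rfl
    have e2 : (∑ l, ∑ β, ∑ α, ωinv x a l * Θmat θ x l β * Δmat Δinv x β α * ((D2mat θ x i - (ωinv x * Γmat Γl x i)ᵀ * Θmat θ x))ᵀ α b) = (((ωinv x * Θmat θ x) * Δmat Δinv x * (D2mat θ x i - (ωinv x * Γmat Γl x i)ᵀ * Θmat θ x)ᵀ)) a b := by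
      rw [mul4_apply (ωinv x) (Θmat θ x) (Δmat Δinv x) (((D2mat θ x i - (ωinv x * Γmat Γl x i)ᵀ * Θmat θ x))ᵀ) a b]
    rw [hsplit, Matrix.add_apply, e1, e2]
  have hDB : ∀ a b : Fin n, diracBivec ωinv θ Δinv x a b = ((ωinv x) + ((ωinv x * Θmat θ x) * Δmat Δinv x * (ωinv x * Θmat θ x)ᵀ)) a b := by
    intro a b
    have e2 : ∑ α, ∑ β, (∑ l, ωinv x a l * d1 (θ α) x l) * Δinv x α β
        * (∑ p, ωinv x b p * d1 (θ β) x p) = (((ωinv x * Θmat θ x) * Δmat Δinv x * (ωinv x * Θmat θ x)ᵀ)) a b := by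
      rw [mul3_apply ((ωinv x * Θmat θ x)) (Δmat Δinv x) (((ωinv x * Θmat θ x))ᵀ) a b]
      refine Finset.sum_congr rfl fun α _ => Finset.sum_congr rfl fun β _ => ?_
      rw [Matrix.transpose_apply, ← hTme x a α, ← hTme x b β]
      simp only [Δmat_apply]
    rw [B5a x a b, Matrix.add_apply, e2]
  have hsum1 : ∑ l, diracChris ωinv Γl θ Δinv x j i l * diracBivec ωinv θ Δinv x l k
      = ((((ωinv x * Γmat Γl x i)) + ((ωinv x * Θmat θ x) * Δmat Δinv x * (D2mat θ x i - (ωinv x * Γmat Γl x i)ᵀ * Θmat θ x)ᵀ)) * ((ωinv x) + ((ωinv x * Θmat θ x) * Δmat Δinv x * (ωinv x * Θmat θ x)ᵀ))) j k := by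
    rw [Matrix.mul_apply]
    exact Finset.sum_congr rfl fun l _ => by rw [hDC j l, hDB l k]
  have hsum2 : ∑ l, diracChris ωinv Γl θ Δinv x k i l * diracBivec ωinv θ Δinv x j l
      = (((ωinv x) + ((ωinv x * Θmat θ x) * Δmat Δinv x * (ωinv x * Θmat θ x)ᵀ)) * (((ωinv x * Γmat Γl x i)) + ((ωinv x * Θmat θ x) * Δmat Δinv x * (D2mat θ x i - (ωinv x * Γmat Γl x i)ᵀ * Θmat θ x)ᵀ))ᵀ) j k := by
    rw [Matrix.mul_apply]
    refine Finset.sum_congr rfl fun l _ => ?_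
    rw [hDC k l, hDB j l, Matrix.transpose_apply]
    ring
  rw [hsum1, hsum2]
  have hz2 := congrArg (fun M => M j k)
    (matM4 (ωinv x) ((ωinv x * Γmat Γl x i)) ((ωinv x * Θmat θ x)) ((D2mat θ x i - (ωinv x * Γmat Γl x i)ᵀ * Θmat θ x)) (Δmat Δinv x) (hWa x) hΔa)
  simp only [Matrix.add_apply, Matrix.zero_apply] at hz2
  linarith
end
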